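/- For any integer q ≥ 2 there are no constants c > 0 and γ ∈ (0,q) such that the number of partitions in Π^m(q) with all blocks of size at least 2 and connected row structure satisfies |Π̃^m_{≥2}(q)| ≤ c^m (m!)^γ for all m ∈ ℕ. -/

import Mathlib

/-!
Fix `t ≥ 1` and `m ≥ 2t`. In each column, the cells of the first `2t` rows form `t` fixed
two-element blocks, chosen so that they link all of these rows; each cell of the remaining
`m - 2t` rows may then join any of the `t` fixed blocks of its column. These choices give
`t ^ (q (m - 2t))` distinct partitions in `Π̃^m_{≥2}(q)`. For `m = (L + 2) t` the count is
`(t ^ (q L)) ^ t`, while `c^m (m!)^γ ≤ (c^(L+2) (L+2)^(γ(L+2)) t^(γ(L+2)))^t`; once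
`q L > γ (L + 2)` the former wins for large `t`.
-/

open Finset Relation Filter
open scoped Nat

section FiberPartition

variable {α β : Type*} [Fintype α] [DecidableEq α] [DecidableEq β]

def fiberPartition (f : α → β) : Finpartition (univ : Finset α) :=
  letI : DecidableRel (Setoid.ker f).r := fun a b => decEq (f a) (f b)
  Finpartition.ofSetoid (Setoid.ker f)

variable {f : α → β}

lemma mem_part_fiberPartition {x y : α} : y ∈ (fiberPartition f).part x ↔ f x = f y :=
  Finpartition.mem_part_ofSetoid_iff_rel

lemma exists_mem_parts_fiberPartition {x y : α} (h : f x = f y) :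
    ∃ B ∈ (fiberPartition f).parts, x ∈ B ∧ y ∈ B :=
  ⟨_, (fiberPartition f).part_mem.2 (mem_univ x), (fiberPartition f).mem_part (mem_univ x),
    mem_part_fiberPartition.2 h⟩

lemma card_filter_le_one_of_mem_parts_fiberPartition {ι : Type*} [DecidableEq ι] {r : α → ι}
    (hf : ∀ x y, f x = f y → r x = r y → x = y) :
    ∀ B ∈ (fiberPartition f).parts, ∀ i, (B.filter (fun x => r x = i)).card ≤ 1 := by
  intro B hB i
  obtain ⟨z, -, rfl⟩ := (fiberPartition f).part_surjOn hB
  refine card_le_one.2 fun x hx y hy => ?_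
  rw [mem_filter, mem_part_fiberPartition] at hx hy
  exact hf x y (hx.1.symm.trans hy.1) (hx.2.trans hy.2.symm)

lemma two_le_card_of_mem_parts_fiberPartition (hf : ∀ x, ∃ y ≠ x, f y = f x) :
    ∀ B ∈ (fiberPartition f).parts, 2 ≤ B.card := by
  intro B hB
  obtain ⟨x, -, rfl⟩ := (fiberPartition f).part_surjOn hB
  obtain ⟨y, hyx, hy⟩ := hf x
  exact one_lt_card.2 ⟨x, (fiberPartition f).mem_part (mem_univ x), y,
    mem_part_fiberPartition.2 hy.symm, hyx.symm⟩

lemma apply_eq_apply_of_fiberPartition_eq {f' : α → β}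
    (h : fiberPartition f = fiberPartition f') {x y : α} (hxy : f x = f y) : f' x = f' y := by
  rw [← mem_part_fiberPartition, ← h, mem_part_fiberPartition]
  exact hxy

end FiberPartition

namespace RowPartition

variable {q m : ℕ}

def rowOf (x : Fin (q * m)) : Fin m := ⟨x / q, Nat.div_lt_of_lt_mul x.2⟩

def colOf (x : Fin (q * m)) : Fin q := ⟨x % q, Nat.mod_lt _ (Nat.pos_of_mul_pos_right x.pos)⟩

def cell (ℓ : Fin m) (j : Fin q) : Fin (q * m) :=
  ⟨q * ℓ + j, calc q * ℓ + j < q * (ℓ + 1) := by rw [mul_add, mul_one]; omega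
    _ ≤ q * m := Nat.mul_le_mul_left q ℓ.2⟩

@[simp] lemma rowOf_cell (ℓ : Fin m) (j : Fin q) : rowOf (cell ℓ j) = ℓ := by
  ext; simp [rowOf, cell, Nat.mul_add_div j.pos, Nat.div_eq_of_lt j.2]

@[simp] lemma colOf_cell (ℓ : Fin m) (j : Fin q) : colOf (cell ℓ j) = j := by
  ext; simp [colOf, cell, Nat.mod_eq_of_lt j.2]

lemma eq_of_rowOf_eq_of_colOf_eq {x y : Fin (q * m)} (hr : rowOf x = rowOf y)
    (hc : colOf x = colOf y) : x = y := by
  ext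
  rw [← Nat.div_add_mod x q, ← Nat.div_add_mod y q]
  simp only [rowOf, colOf, Fin.mk.injEq] at hr hc
  rw [hr, hc]

/-- `sharesBlock σ` is adjacency in the row partition `σ*`, and `IsConnectedGeTwo σ` says
`σ ∈ Π̃^m_{≥2}(q)`; rows are indexed from `0`, row `ℓ` being `{x | x / q = ℓ}`. -/
def sharesBlock (σ : Finpartition (univ : Finset (Fin (q * m)))) (u v : Fin m) : Prop :=
  ∃ B ∈ σ.parts, (∃ x ∈ B, x.val / q = u.val) ∧ (∃ x ∈ B, x.val / q = v.val)

def IsConnectedGeTwo (σ : Finpartition (univ : Finset (Fin (q * m)))) : Prop :=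
  (∀ B ∈ σ.parts, ∀ ℓ < m, (B.filter (fun i => i.val / q = ℓ)).card ≤ 1) ∧
    (∀ B ∈ σ.parts, 2 ≤ B.card) ∧ ∀ a b : Fin m, ReflTransGen (sharesBlock σ) a b

variable {t : ℕ}

/-- Rows `ℓ < 2t` are fixed: in each column `j ≠ 0` rows `s` and `t + s` share a block, while in
column `0` row `t + s` joins row `s + 1` (and row `2t - 1` joins row `0`), which links all of
them. Row `2t + i` puts its cell in column `j` into the block of row `G i j`. -/
def hub (G : Fin (m - 2 * t) → Fin q → Fin t) (ℓ : Fin m) (j : Fin q) : ℕ :=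
  if h : 2 * t ≤ ℓ then G ⟨ℓ - 2 * t, by omega⟩ j
  else if ℓ < t then ℓ
  else if (j : ℕ) ≠ 0 then ℓ - t
  else if ℓ + 1 = 2 * t then 0 else ℓ + 1 - t

def label (G : Fin (m - 2 * t) → Fin q → Fin t) (x : Fin (q * m)) : ℕ × Fin q :=
  (hub G (rowOf x) (colOf x), colOf x)

variable (G : Fin (m - 2 * t) → Fin q → Fin t)

lemma hub_lt (ℓ : Fin m) (j : Fin q) : hub G ℓ j < t := by
  unfold hub
  split_ifs <;> first | exact (G _ _).2 | omega

lemma hub_of_lt {r : ℕ} (hr : r < t) (hrm : r < m) (j : Fin q) : hub G ⟨r, hrm⟩ j = r := by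
  simp [hub, hr, show ¬ 2 * t ≤ r by omega]

lemma hub_two_mul_add (i : Fin (m - 2 * t)) (j : Fin q) :
    hub G ⟨2 * t + i, by omega⟩ j = G i j := by
  simp [hub]

lemma label_cell (ℓ : Fin m) (j : Fin q) : label G (cell ℓ j) = (hub G ℓ j, j) := by
  simp [label]

lemma exists_hub_eq (hm : 2 * t ≤ m) {r : ℕ} (hr : r < t) (j : Fin q) :
    ∃ ℓ : Fin m, t ≤ ℓ ∧ hub G ℓ j = r := by
  by_cases hj : (j : ℕ) = 0
  · refine ⟨⟨t + if r = 0 then t - 1 else r - 1, by split_ifs <;> omega⟩, by simp, ?_⟩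
    unfold hub
    dsimp only
    split_ifs <;> omega
  · exact ⟨⟨t + r, by omega⟩, by simp, by unfold hub; dsimp only; split_ifs <;> omega⟩

lemma exists_ne_label_eq (hm : 2 * t ≤ m) (x : Fin (q * m)) :
    ∃ y ≠ x, label G y = label G x := by
  have hr := hub_lt G (rowOf x) (colOf x)
  obtain ⟨ℓ, htℓ, hℓ⟩ := exists_hub_eq G hm hr (colOf x)
  set a : Fin (q * m) := cell ⟨hub G (rowOf x) (colOf x), by omega⟩ (colOf x)
  set b : Fin (q * m) := cell ℓ (colOf x)
  have ha : label G a = label G x := by rw [label_cell, hub_of_lt G hr]; rfl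
  have hb : label G b = label G x := by rw [label_cell, hℓ]; rfl
  have hab : a ≠ b := fun h => by
    have := congrArg (fun y => (rowOf y : ℕ)) h
    simp only [a, b, rowOf_cell] at this
    omega
  by_cases hxa : x = a
  · exact ⟨b, hxa ▸ hab.symm, hb⟩
  · exact ⟨a, Ne.symm hxa, ha⟩

lemma sharesBlock_of_hub_eq {ℓ ℓ' : Fin m} (j : Fin q) (h : hub G ℓ j = hub G ℓ' j) :
    sharesBlock (fiberPartition (label G)) ℓ ℓ' := by
  obtain ⟨B, hB, hx, hy⟩ := exists_mem_parts_fiberPartition (f := label G)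
    (x := cell ℓ j) (y := cell ℓ' j) (by simp [label_cell, h])
  exact ⟨B, hB, ⟨_, hx, congrArg Fin.val (rowOf_cell ℓ j)⟩,
    ⟨_, hy, congrArg Fin.val (rowOf_cell ℓ' j)⟩⟩

lemma reflTransGen_sharesBlock_zero (hq : 2 ≤ q) (hm : 2 * t ≤ m) (ht : 0 < t) (ℓ : Fin m) :
    ReflTransGen (sharesBlock (fiberPartition (label G))) ℓ ⟨0, by omega⟩ := by
  have fixed : ∀ s (hs : s < t), ReflTransGen (sharesBlock (fiberPartition (label G)))
      ⟨s, by omega⟩ ⟨0, by omega⟩ := by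
    intro s hs
    induction s with
    | zero => rfl
    | succ s ih =>
      refine .head (b := ⟨t + s, by omega⟩) (sharesBlock_of_hub_eq G ⟨0, by omega⟩ ?_)
        (.head (sharesBlock_of_hub_eq G ⟨1, hq⟩ ?_) (ih (by omega)))
      · rw [hub_of_lt G hs]; unfold hub; dsimp only; split_ifs <;> omega
      · rw [hub_of_lt G (show s < t by omega)]; unfold hub; dsimp only; split_ifs <;> omega
  have hlt := hub_lt G ℓ ⟨0, by omega⟩
  exact .head (sharesBlock_of_hub_eq G ⟨0, by omega⟩ (hub_of_lt G hlt (by omega) _).symm)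
    (fixed _ hlt)

lemma isConnectedGeTwo_fiberPartition_label (hq : 2 ≤ q) (hm : 2 * t ≤ m) (ht : 0 < t) :
    IsConnectedGeTwo (fiberPartition (label G)) := by
  refine ⟨fun B hB ℓ _ => card_filter_le_one_of_mem_parts_fiberPartition
      (r := fun x : Fin (q * m) => x.val / q) (fun x y hxy hr => ?_) B hB ℓ,
    two_le_card_of_mem_parts_fiberPartition (exists_ne_label_eq G hm),
    fun a b => (reflTransGen_sharesBlock_zero G hq hm ht a).trans ?_⟩
  · exact eq_of_rowOf_eq_of_colOf_eq (Fin.ext hr) (congrArg Prod.snd hxy)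
  · have : Std.Symm (sharesBlock (fiberPartition (label G))) :=
      ⟨fun _ _ ⟨B, hB, hu, hv⟩ => ⟨B, hB, hv, hu⟩⟩
    exact Std.Symm.symm _ _ (reflTransGen_sharesBlock_zero G hq hm ht b)

lemma fiberPartition_label_injective :
    Function.Injective fun G : Fin (m - 2 * t) → Fin q → Fin t => fiberPartition (label G) := by
  intro G G' h
  funext i j
  have hi : 2 * t + i < m := by omega
  have hlt := (G i j).2
  have key := apply_eq_apply_of_fiberPartition_eq h
    (x := cell ⟨2 * t + i, hi⟩ j) (y := cell ⟨G i j, by omega⟩ j)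
    (by simp only [label_cell, hub_two_mul_add, hub_of_lt G hlt])
  simp only [label_cell, hub_two_mul_add, hub_of_lt G' hlt (by omega), Prod.mk.injEq,
    and_true] at key
  exact Fin.ext key.symm

lemma pow_le_card_isConnectedGeTwo (hq : 2 ≤ q) (hm : 2 * t ≤ m) (ht : 0 < t) :
    t ^ (q * (m - 2 * t)) ≤ Nat.card {σ // IsConnectedGeTwo (q := q) (m := m) σ} := by
  calc t ^ (q * (m - 2 * t)) = Nat.card (Fin (m - 2 * t) → Fin q → Fin t) := by
        simp [← pow_mul, mul_comm]
    _ ≤ _ := Nat.card_le_card_of_injective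
        (fun G => ⟨_, isConnectedGeTwo_fiberPartition_label G hq hm ht⟩)
        fun G G' h => fiberPartition_label_injective (congrArg Subtype.val h)

end RowPartition

lemma factorial_rpow_le {γ : ℝ} (hγ : 0 ≤ γ) (n : ℕ) : (n ! : ℝ) ^ γ ≤ (n : ℝ) ^ (γ * n) :=
  calc (n ! : ℝ) ^ γ ≤ ((n : ℝ) ^ n) ^ γ :=
        Real.rpow_le_rpow (by positivity) (by exact_mod_cast Nat.factorial_le_pow n) hγ
    _ = (n : ℝ) ^ (γ * n) := by
        rw [← Real.rpow_natCast, ← Real.rpow_mul (by positivity), mul_comm]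

lemma exists_mul_factorial_rpow_lt_pow (q : ℕ) {c γ : ℝ} (hc : 0 < c) (hγ : 0 ≤ γ)
    (hγq : γ < q) : ∃ L t : ℕ, 0 < t ∧
      c ^ ((L + 2) * t) * (((L + 2) * t)! : ℝ) ^ γ < (t : ℝ) ^ (q * (L * t)) := by
  obtain ⟨L, hL⟩ := exists_nat_gt (2 * γ / (q - γ))
  rw [div_lt_iff₀ (by linarith)] at hL
  set a : ℝ := q * L - γ * (L + 2)
  have ha : 0 < a := by linarith
  set C := c ^ (L + 2) * ((L + 2 : ℕ) : ℝ) ^ (γ * (L + 2))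
  obtain ⟨t, htC, ht⟩ : ∃ t : ℕ, C < (t : ℝ) ^ a ∧ 1 ≤ t :=
    (((tendsto_rpow_atTop ha).comp tendsto_natCast_atTop_atTop).eventually_gt_atTop C).and
      (eventually_ge_atTop 1) |>.exists
  refine ⟨L, t, ht, ?_⟩
  have htpos : (0 : ℝ) < t := by exact_mod_cast ht
  calc c ^ ((L + 2) * t) * (((L + 2) * t)! : ℝ) ^ γ
      ≤ c ^ ((L + 2) * t) * (((L + 2) * t : ℕ) : ℝ) ^ (γ * ((L + 2) * t : ℕ)) := by
        gcongr; exact factorial_rpow_le hγ _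
    _ = (C * (t : ℝ) ^ (γ * (L + 2))) ^ t := by
        rw [Nat.cast_mul, show γ * (((L + 2 : ℕ) : ℝ) * t) = γ * (L + 2) * t by push_cast; ring,
          Real.rpow_mul_natCast (by positivity), Real.mul_rpow (by positivity) htpos.le,
          pow_mul, ← mul_pow, mul_assoc]
    _ < ((t : ℝ) ^ a * (t : ℝ) ^ (γ * (L + 2))) ^ t := by
        gcongr
    _ = (t : ℝ) ^ (q * (L * t)) := by
        rw [← Real.rpow_add htpos, show a + γ * (L + 2) = ((q * L : ℕ) : ℝ) by push_cast; ring,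
          Real.rpow_natCast, ← pow_mul, mul_assoc]

/-- For any integer `q ≥ 2` there are no constants `c > 0` and `γ ∈ (0,q)` such
that `|Π̃^m_{≥2}(q)| ≤ c^m (m!)^γ` for all `m ∈ ℕ`, where `Π̃^m_{≥2}(q)` is the set of
partitions of `{1,...,qm}` meeting each row in at most one element per block, with all blocks
of size at least `2`, and with connected row structure (`|σ*| = 1`). -/
theorem stmt2 (q : ℕ) (hq : 2 ≤ q) :
    ¬ ∃ (c γ : ℝ), 0 < c ∧ 0 < γ ∧ γ < q ∧ ∀ m : ℕ, 0 < m →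
      (Nat.card {σ : Finpartition (Finset.univ : Finset (Fin (q * m))) //
          (∀ B ∈ σ.parts, ∀ ℓ < m, (B.filter (fun i => i.val / q = ℓ)).card ≤ 1) ∧
          (∀ B ∈ σ.parts, 2 ≤ B.card) ∧
          (∀ a b : Fin m, Relation.ReflTransGen
            (fun u v : Fin m => ∃ B ∈ σ.parts,
              (∃ x ∈ B, x.val / q = u.val) ∧ (∃ x ∈ B, x.val / q = v.val)) a b)} : ℝ) ≤
        c ^ m * (Nat.factorial m : ℝ) ^ γ := by
  rintro ⟨c, γ, hc, hγ, hγq, hbound⟩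
  obtain ⟨L, t, ht, hlt⟩ := exists_mul_factorial_rpow_lt_pow q hc hγ.le hγq
  have hcount := RowPartition.pow_le_card_isConnectedGeTwo (m := (L + 2) * t) hq
    (by rw [add_mul]; omega) ht
  rw [show (L + 2) * t - 2 * t = L * t by rw [add_mul]; omega] at hcount
  exact (hbound _ (by positivity)).not_gt (hlt.trans_le (by exact_mod_cast hcount))
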